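/- Let π : ℝ³ → ℝ² denote the vertical projection π(x, y, z) = (x, y). Let ζ ≥ 0, let a₁, …, a_n be vectors in ℝ² and b₁, …, b_n ∈ ℝ with affine functionals h_l(x) = ⟨a_l, x⟩ + b_l, and let U = {x ∈ ℝ² : h_l(x) ≤ ‖a_l‖·ζ for all l = 1, …, n} be the inflated polyhedron. Let s ∈ ℝ³ with third coordinate s₃ > 0. Let P₁ ⊆ ℝ³ be a set of points each of whose third coordinate q₃ satisfies 0 ≤ q₃ < s₃, and suppose: (i) for every q ∈ P₁ there exists a point x' ∈ ℝ³ with ‖q − x'‖ ≤ ζ and h_l(π(x')) ≤ 0 for all l; and (ii) for every q ∈ P₁, the oblique projection p₀(q) = s + (s₃/(s₃ − q₃))·(q − s) satisfies π(p₀(q)) ∈ U. Let P₂ = { s + u·(q − s) : q ∈ P₁, u ∈ [1, s₃/(s₃ − q₃)] } be the set of points occluded by P₁. Then π(P₁ ∪ P₂) ⊆ U. -/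

import Mathlib

/-! The obstacle is covered because `U` is convex and `π` is linear and `1`-Lipschitz.
A visible point `q` lies within `ζ` of a scan point satisfying `h_l ≤ 0`, so by Cauchy–Schwarz
`h_l (π q) ≤ ‖a_l‖ ζ`. An occluded point lies on the ray from `s` through `q`, between `q`
and its oblique projection `p₀(q)`; both project into `U`, hence so does every point between. -/

open scoped RealInnerProductSpace

/-- The vertical projection `π : ℝ³ → ℝ²`, `π (x, y, z) = (x, y)`. -/
def vertProj (p : EuclideanSpace ℝ (Fin 3)) : EuclideanSpace ℝ (Fin 2) := WithLp.toLp 2 ![p 0, p 1]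

def vertProjₗ : EuclideanSpace ℝ (Fin 3) →ₗ[ℝ] EuclideanSpace ℝ (Fin 2) where
  toFun := vertProj
  map_add' x y := by ext i; fin_cases i <;> simp [vertProj]
  map_smul' c x := by ext i; fin_cases i <;> simp [vertProj]

@[simp]
lemma coe_vertProjₗ : ⇑vertProjₗ = vertProj := rfl

lemma norm_vertProj_le (x : EuclideanSpace ℝ (Fin 3)) : ‖vertProj x‖ ≤ ‖x‖ := by
  rw [EuclideanSpace.norm_eq, EuclideanSpace.norm_eq]
  refine Real.sqrt_le_sqrt ?_
  simp only [vertProj, Fin.sum_univ_two, Fin.sum_univ_three, PiLp.toLp_apply,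
    Matrix.cons_val_zero, Matrix.cons_val_one]
  linarith [sq_nonneg ‖x 2‖]

section InnerProductSpace

variable {E : Type*} [NormedAddCommGroup E] [InnerProductSpace ℝ E]

lemma convex_setOf_forall_inner_add_le {ι : Type*} (a : ι → E) (b c : ι → ℝ) :
    Convex ℝ {x : E | ∀ l, ⟪a l, x⟫ + b l ≤ c l} := by
  simp only [Set.ofPred_forall]
  refine convex_iInter fun l => ?_
  simpa only [innerₛₗ_apply_apply, le_sub_iff_add_le] using
    convex_halfSpace_le (innerₛₗ ℝ (a l)).isLinear (c l - b l)

lemma inner_add_le_of_norm_sub_le {a x y : E} {b ζ : ℝ} (hy : ⟪a, y⟫ + b ≤ 0)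
    (hxy : ‖x - y‖ ≤ ζ) : ⟪a, x⟫ + b ≤ ‖a‖ * ζ :=
  calc ⟪a, x⟫ + b = ⟪a, y⟫ + b + ⟪a, x - y⟫ := by rw [inner_sub_right]; ring
    _ ≤ 0 + ‖a‖ * ‖x - y‖ := add_le_add hy (real_inner_le_norm _ _)
    _ ≤ ‖a‖ * ζ := by rw [zero_add]; gcongr

end InnerProductSpace

lemma Convex.add_smul_sub_mem_of_mem {E : Type*} [AddCommGroup E] [Module ℝ E] {S : Set E}
    (hS : Convex ℝ S) {s q : E} {u₁ u₂ u : ℝ} (h₁ : s + u₁ • (q - s) ∈ S)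
    (h₂ : s + u₂ • (q - s) ∈ S) (hu : u ∈ Set.Icc u₁ u₂) : s + u • (q - s) ∈ S := by
  have hray : Convex ℝ {u : ℝ | s + u • (q - s) ∈ S} := by
    simpa only [Set.preimage, AffineMap.lineMap_apply_module', add_comm] using
      hS.affine_preimage (AffineMap.lineMap s q)
  exact hray.ordConnected.out h₁ h₂ hu

theorem occupied_area_covers_obstacle_projection_general {n : ℕ} (ζ : ℝ)
    (a : Fin n → EuclideanSpace ℝ (Fin 2)) (b : Fin n → ℝ)
    (U : Set (EuclideanSpace ℝ (Fin 2)))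
    (hU : U = {x : EuclideanSpace ℝ (Fin 2) | ∀ l, ⟪a l, x⟫ + b l ≤ ‖a l‖ * ζ})
    (s : EuclideanSpace ℝ (Fin 3))
    (P₁ : Set (EuclideanSpace ℝ (Fin 3)))
    (hscan : ∀ q ∈ P₁, ∃ x' : EuclideanSpace ℝ (Fin 3),
      ‖q - x'‖ ≤ ζ ∧ ∀ l, ⟪a l, vertProj x'⟫ + b l ≤ 0)
    (hobl : ∀ q ∈ P₁, vertProj (s + (s 2 / (s 2 - q 2)) • (q - s)) ∈ U)
    (P₂ : Set (EuclideanSpace ℝ (Fin 3)))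
    (hP₂ : P₂ = {p : EuclideanSpace ℝ (Fin 3) |
      ∃ q ∈ P₁, ∃ u ∈ Set.Icc (1 : ℝ) (s 2 / (s 2 - q 2)), p = s + u • (q - s)}) :
    vertProj '' (P₁ ∪ P₂) ⊆ U := by
  have hvisible : ∀ q ∈ P₁, vertProj q ∈ U := by
    intro q hq
    obtain ⟨x', hqx', hx'⟩ := hscan q hq
    rw [hU]
    intro l
    refine inner_add_le_of_norm_sub_le (hx' l) ?_
    rw [← coe_vertProjₗ, ← map_sub]
    exact (norm_vertProj_le _).trans hqx'
  have hconvex : Convex ℝ (vertProj ⁻¹' U) := by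
    rw [← coe_vertProjₗ, hU]
    exact (convex_setOf_forall_inner_add_le _ _ _).linear_preimage _
  rintro _ ⟨p, hp | hp, rfl⟩
  · exact hvisible p hp
  · rw [hP₂] at hp
    obtain ⟨q, hq, u, hu, rfl⟩ := hp
    exact hconvex.add_smul_sub_mem_of_mem (by simpa using hvisible q hq) (hobl q hq) hu

/-- Abstract form of Lemma 1 of the paper: the occupied area (the inflated polyhedron
`U`) contains the vertical projection of the whole obstacle `P₁ ∪ P₂`, where `P₁` are
the points in the line of sight of the LiDAR at `s` (each within `ζ` of a scan point
whose projection satisfies the unrelaxed constraints, and whose oblique projection lies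
in `U`), and `P₂` are the points occluded by `P₁`. -/
theorem occupied_area_covers_obstacle_projection {n : ℕ} (ζ : ℝ) (hζ : 0 ≤ ζ)
    (a : Fin n → EuclideanSpace ℝ (Fin 2)) (b : Fin n → ℝ)
    (U : Set (EuclideanSpace ℝ (Fin 2)))
    (hU : U = {x : EuclideanSpace ℝ (Fin 2) | ∀ l, ⟪a l, x⟫ + b l ≤ ‖a l‖ * ζ})
    (s : EuclideanSpace ℝ (Fin 3)) (hs : 0 < s 2)
    (P₁ : Set (EuclideanSpace ℝ (Fin 3)))
    (hP₁z : ∀ q ∈ P₁, 0 ≤ q 2 ∧ q 2 < s 2)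
    (hscan : ∀ q ∈ P₁, ∃ x' : EuclideanSpace ℝ (Fin 3),
      ‖q - x'‖ ≤ ζ ∧ ∀ l, ⟪a l, vertProj x'⟫ + b l ≤ 0)
    (hobl : ∀ q ∈ P₁, vertProj (s + (s 2 / (s 2 - q 2)) • (q - s)) ∈ U)
    (P₂ : Set (EuclideanSpace ℝ (Fin 3)))
    (hP₂ : P₂ = {p : EuclideanSpace ℝ (Fin 3) |
      ∃ q ∈ P₁, ∃ u ∈ Set.Icc (1 : ℝ) (s 2 / (s 2 - q 2)), p = s + u • (q - s)}) :
    vertProj '' (P₁ ∪ P₂) ⊆ U :=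
  occupied_area_covers_obstacle_projection_general ζ a b U hU s P₁ hscan hobl P₂ hP₂
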